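/- Let φ be a refinement-stable and non-contradictory consensus method for profiles of k hierarchies on X. Then for every profile P = (H_1, …, H_k) and every cluster c ∈ φ(P), there is at least one index i with c ∈ H_i; that is, every cluster of the output is already present in some input tree. -/

import Mathlib

/-!
If a cluster `c` of `φ(P)` were missing from every input tree `Hᵢ`, refine each `Hᵢ` to a
hierarchy containing a cluster incompatible with `c`. Either `Hᵢ` already has one, or `c` is
compatible with `Hᵢ`; then, for the smallest cluster `m` of `Hᵢ` strictly above `c`, every child
of `m` lies inside `c` or misses it, and the union of a child meeting `c` with a child outside `c`
is compatible with `Hᵢ` but not with `c`. By refinement stability `c` stays in the output of the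
refined profile, contradicting non-contradiction.
-/

/-- Two clusters (nonempty subsets of the taxon set) are compatible if one
contains the other or they are disjoint. -/
def Compatible {X : Type*} (c₁ c₂ : Set X) : Prop :=
  c₁ ⊆ c₂ ∨ c₂ ⊆ c₁ ∨ c₁ ∩ c₂ = ∅

/-- A hierarchy on `X`: a family of pairwise compatible nonempty clusters
containing `X` itself and all singletons (the cluster encoding of a rooted
phylogenetic `X`-tree). -/
def IsHierarchy {X : Type*} (H : Set (Set X)) : Prop :=
  (∀ c ∈ H, c.Nonempty) ∧
  (∀ c₁ ∈ H, ∀ c₂ ∈ H, Compatible c₁ c₂) ∧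
  Set.univ ∈ H ∧
  ∀ x : X, {x} ∈ H

/-- The strict consensus of a profile: all clusters present in every tree. -/
def strictCons {X : Type*} {k : ℕ} (P : Fin k → Set (Set X)) : Set (Set X) :=
  {c | ∀ i, c ∈ P i}

/-- The majority-rule consensus `MR_p`: all clusters present in at least `p·k`
of the input trees. -/
def majCons {X : Type*} (p : ℝ) {k : ℕ} (P : Fin k → Set (Set X)) : Set (Set X) :=
  {c | p * (k : ℝ) ≤ (({i : Fin k | c ∈ P i}).ncard : ℝ)}

/-- The loose consensus: all clusters present in at least one input tree and
compatible with every cluster of every input tree. -/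
def looseCons {X : Type*} {k : ℕ} (P : Fin k → Set (Set X)) : Set (Set X) :=
  {c | (∃ i, c ∈ P i) ∧ ∀ j, ∀ c' ∈ P j, Compatible c c'}

theorem Compatible.symm {X : Type*} {c₁ c₂ : Set X} (h : Compatible c₁ c₂) :
    Compatible c₂ c₁ := by
  rcases h with h | h | h
  · exact Or.inr (Or.inl h)
  · exact Or.inl h
  · exact Or.inr (Or.inr (Set.inter_comm c₁ c₂ ▸ h))

def IsChild {X : Type*} (H : Set (Set X)) (m a : Set X) : Prop :=
  Maximal (fun e => e ∈ H ∧ e ⊂ m) a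

section Children

variable {X : Type*} {H : Set (Set X)} {m a b : Set X}

theorem exists_isChild_mem (hfin : H.Finite) {x : X} (hx : {x} ∈ H) (hxm : {x} ⊂ m) :
    ∃ a, x ∈ a ∧ IsChild H m a := by
  obtain ⟨a, hxa, ha⟩ := (hfin.sep (· ⊂ m)).exists_le_maximal ⟨hx, hxm⟩
  exact ⟨a, Set.singleton_subset_iff.mp hxa, ha⟩

theorem compatible_union_of_isChild (hpc : ∀ c₁ ∈ H, ∀ c₂ ∈ H, Compatible c₁ c₂)
    (hm : m ∈ H) (ha : IsChild H m a) (hb : IsChild H m b) :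
    ∀ e ∈ H, Compatible (a ∪ b) e := by
  intro e he
  have subset_of_child {a} (ha : IsChild H m a) (hae : a ⊆ e) (hem : e ⊂ m) : e ⊆ a :=
    ha.2 ⟨he, hem⟩ hae
  rcases hpc e he m hm with hem | hme | hdisj
  · rcases hem.eq_or_ssubset with rfl | hem
    · exact Or.inl (Set.union_subset ha.1.2.subset hb.1.2.subset)
    rcases hpc e he a ha.1.1 with hea | hae | hea
    · exact Or.inr (Or.inl (hea.trans Set.subset_union_left))
    · exact Or.inr (Or.inl ((subset_of_child ha hae hem).trans Set.subset_union_left))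
    rcases hpc e he b hb.1.1 with heb | hbe | heb
    · exact Or.inr (Or.inl (heb.trans Set.subset_union_right))
    · exact Or.inr (Or.inl ((subset_of_child hb hbe hem).trans Set.subset_union_right))
    · refine Or.inr (Or.inr ?_)
      rw [Set.union_inter_distrib_right, Set.inter_comm a, Set.inter_comm b, hea, heb,
        Set.union_empty]
  · exact Or.inl (Set.union_subset (ha.1.2.subset.trans hme) (hb.1.2.subset.trans hme))
  · refine Or.inr (Or.inr (Set.subset_empty_iff.mp ?_))
    rw [← hdisj, Set.inter_comm e]
    exact Set.inter_subset_inter_left _ (Set.union_subset ha.1.2.subset hb.1.2.subset)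

theorem IsChild.subset_or_disjoint {c : Set X} (hcH : c ∉ H) (hc : ∀ e ∈ H, Compatible c e)
    (hm : Minimal (fun e => e ∈ H ∧ c ⊂ e) m) (ha : IsChild H m a) :
    a ⊆ c ∨ a ∩ c = ∅ := by
  rcases hc a ha.1.1 with hca | hac | hdisj
  · have hca : c ⊂ a := hca.ssubset_of_ne (fun h => hcH (h ▸ ha.1.1))
    exact absurd (hm.2 ⟨ha.1.1, hca⟩ ha.1.2.subset) ha.1.2.not_subset
  · exact Or.inl hac
  · exact Or.inr (Set.inter_comm a c ▸ hdisj)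

end Children

namespace IsHierarchy

variable {X : Type*} {H : Set (Set X)}

theorem insert_of_forall_compatible (hH : IsHierarchy H) {d : Set X} (hd : d.Nonempty)
    (hdH : ∀ e ∈ H, Compatible d e) : IsHierarchy (insert d H) := by
  obtain ⟨hne, hpc, huniv, hsingle⟩ := hH
  refine ⟨?_, ?_, Set.mem_insert_of_mem _ huniv, fun x => Set.mem_insert_of_mem _ (hsingle x)⟩
  · rintro e (rfl | he)
    exacts [hd, hne e he]
  · rintro e₁ (rfl | h₁) e₂ (rfl | h₂)
    · exact Or.inl subset_rfl
    · exact hdH e₂ h₂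
    · exact (hdH e₁ h₁).symm
    · exact hpc e₁ h₁ e₂ h₂

theorem exists_insert_not_compatible (hH : IsHierarchy H) (hfin : H.Finite) {c : Set X}
    (hc : c.Nonempty) (hcH : c ∉ H) (hcomp : ∀ e ∈ H, Compatible c e) :
    ∃ d, IsHierarchy (insert d H) ∧ ¬ Compatible c d := by
  have hcu : c ⊂ Set.univ := Set.ssubset_univ_iff.mpr fun h => hcH (h ▸ hH.2.2.1)
  obtain ⟨m, hm⟩ := (hfin.sep (c ⊂ ·)).exists_minimal ⟨Set.univ, hH.2.2.1, hcu⟩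
  obtain ⟨x, hx⟩ := hc
  obtain ⟨y, hym, hyc⟩ := Set.exists_of_ssubset hm.1.2
  have hxy : x ≠ y := fun h => hyc (h ▸ hx)
  have hsingleton_ssubset {z} (hz : z ∈ m) (hw : ∃ w ∈ m, w ≠ z) : {z} ⊂ m := by
    obtain ⟨w, hw, hwz⟩ := hw
    exact Set.ssubset_iff_of_subset (Set.singleton_subset_iff.mpr hz) |>.mpr ⟨w, hw, hwz⟩
  have hxm : x ∈ m := hm.1.2.subset hx
  obtain ⟨a, hxa, ha⟩ :=
    exists_isChild_mem hfin (hH.2.2.2 x) (hsingleton_ssubset hxm ⟨y, hym, hxy.symm⟩)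
  obtain ⟨b, hyb, hb⟩ :=
    exists_isChild_mem hfin (hH.2.2.2 y) (hsingleton_ssubset hym ⟨x, hxm, hxy⟩)
  have hac : a ⊆ c := (ha.subset_or_disjoint hcH hcomp hm).resolve_right
    (Set.nonempty_iff_ne_empty.mp ⟨x, hxa, hx⟩)
  have hbc : b ∩ c = ∅ := (hb.subset_or_disjoint hcH hcomp hm).resolve_left
    fun h => hyc (h hyb)
  refine ⟨a ∪ b, hH.insert_of_forall_compatible ⟨x, Or.inl hxa⟩
    (compatible_union_of_isChild hH.2.1 hm.1.1 ha hb), ?_⟩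
  rintro (h | h | h)
  · have hca : c ⊆ a := fun z hz => (h hz).resolve_right
      fun hzb => Set.eq_empty_iff_forall_notMem.mp hbc z ⟨hzb, hz⟩
    exact hcH (hca.antisymm hac ▸ ha.1.1)
  · exact hyc (h (Or.inr hyb))
  · exact Set.eq_empty_iff_forall_notMem.mp h x ⟨hx, Or.inl hxa⟩

theorem exists_refinement_not_compatible (hH : IsHierarchy H) (hfin : H.Finite) {c : Set X}
    (hc : c.Nonempty) (hcH : c ∉ H) :
    ∃ H', IsHierarchy H' ∧ H ⊆ H' ∧ ∃ d ∈ H', ¬ Compatible c d := by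
  by_cases hcomp : ∀ e ∈ H, Compatible c e
  · obtain ⟨d, hd, hcd⟩ := hH.exists_insert_not_compatible hfin hc hcH hcomp
    exact ⟨insert d H, hd, Set.subset_insert d H, d, Set.mem_insert d H, hcd⟩
  · obtain ⟨e, he, hce⟩ := not_forall₂.mp hcomp
    exact ⟨H, hH, subset_rfl, e, he, hce⟩

end IsHierarchy

theorem output_clusters_present_in_input_general
    {X : Type*} [Fintype X] {k : ℕ}
    (φ : (Fin k → Set (Set X)) → Set (Set X))
    (hmap : ∀ P : Fin k → Set (Set X),
      (∀ i, IsHierarchy (P i)) → IsHierarchy (φ P))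
    (hstab : ∀ P P' : Fin k → Set (Set X),
      (∀ i, IsHierarchy (P i)) → (∀ i, IsHierarchy (P' i)) →
      (∀ i, P i ⊆ P' i) → φ P ⊆ φ P')
    (hnc : ∀ P : Fin k → Set (Set X), (∀ i, IsHierarchy (P i)) →
      ∀ c ∈ φ P, ∃ i, ∀ c' ∈ P i, Compatible c c')
    (P : Fin k → Set (Set X)) (hP : ∀ i, IsHierarchy (P i)) :
    ∀ c ∈ φ P, ∃ i, c ∈ P i := by
  intro c hc
  by_contra! hcP
  have hc_ne : c.Nonempty := (hmap P hP).1 c hc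
  choose P' hP' hPP' hcontra using fun i =>
    (hP i).exists_refinement_not_compatible (Set.toFinite _) hc_ne (hcP i)
  obtain ⟨i, hi⟩ := hnc P' hP' c (hstab P P' hP hP' hPP' hc)
  obtain ⟨d, hd, hcd⟩ := hcontra i
  exact hcd (hi d hd)

/-- If `φ` is a refinement-stable and non-contradictory consensus method,
then every cluster of the output `φ(P)` is already present in some input
hierarchy. -/
theorem output_clusters_present_in_input
    {X : Type*} [Fintype X] [Nonempty X] {k : ℕ} (hk : 1 ≤ k)
    (φ : (Fin k → Set (Set X)) → Set (Set X))
    (hmap : ∀ P : Fin k → Set (Set X),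
      (∀ i, IsHierarchy (P i)) → IsHierarchy (φ P))
    (hstab : ∀ P P' : Fin k → Set (Set X),
      (∀ i, IsHierarchy (P i)) → (∀ i, IsHierarchy (P' i)) →
      (∀ i, P i ⊆ P' i) → φ P ⊆ φ P')
    (hnc : ∀ P : Fin k → Set (Set X), (∀ i, IsHierarchy (P i)) →
      ∀ c ∈ φ P, ∃ i, ∀ c' ∈ P i, Compatible c c')
    (P : Fin k → Set (Set X)) (hP : ∀ i, IsHierarchy (P i)) :
    ∀ c ∈ φ P, ∃ i, c ∈ P i :=
  output_clusters_present_in_input_general φ hmap hstab hnc P hP
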